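/- In the short-string limit ω → ∞ one has E(ω) → 0, S(ω) → 0, and the leading Regge trajectory relation holds: lim_{ω → ∞} E(ω)² / S(ω) = 2√λ. -/

import Mathlib

noncomputable section

open Real

/-- Complete elliptic integral of the first kind,
K(m) = ∫₀^{π/2} (1 − m sin²θ)^{−1/2} dθ. -/
def ellK (m : ℝ) : ℝ := ∫ θ in (0:ℝ)..(π / 2), (Real.sqrt (1 - m * Real.sin θ ^ 2))⁻¹

/-- Complete elliptic integral of the second kind,
E(m) = ∫₀^{π/2} (1 − m sin²θ)^{1/2} dθ. -/
def ellE (m : ℝ) : ℝ := ∫ θ in (0:ℝ)..(π / 2), Real.sqrt (1 - m * Real.sin θ ^ 2)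


/-- The GKP energy E(ω) = (2√λ/π)·(ω/(ω²−1))·E(1/ω²), with √λ = L². -/
def gkpE (L ω : ℝ) : ℝ := (2 * L ^ 2 / π) * (ω / (ω ^ 2 - 1)) * ellE (1 / ω ^ 2)

/-- The GKP spin S(ω) = (2√λ/π)·((ω²/(ω²−1))·E(1/ω²) − K(1/ω²)), with √λ = L². -/
def gkpS (L ω : ℝ) : ℝ :=
  (2 * L ^ 2 / π) * ((ω ^ 2 / (ω ^ 2 - 1)) * ellE (1 / ω ^ 2) - ellK (1 / ω ^ 2))

open Filter Topology

/-!
Put m = 1/ω² and c = 2L²/π. Then `gkpE L ω = c·√m/(1-m)·ellE m`, and the pointwise identity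
√u - (1-m)/√u = m cos²θ/√u for u = 1 - m sin²θ gives `gkpS L ω = c·m/(1-m)·ellJ m`.
Since `ellE` and `ellJ` are continuous at m = 0 with values π/2 and π/4, energy and spin tend
to 0 while E²/S = c·(ellE m)²/((1-m)·ellJ m) → c·π = 2L².
-/

open Set

def ellJ (m : ℝ) : ℝ := ∫ θ in (0:ℝ)..(π / 2), cos θ ^ 2 * (√(1 - m * sin θ ^ 2))⁻¹

lemma one_sub_mul_sin_sq_pos {m : ℝ} (hm : m < 1) (θ : ℝ) : 0 < 1 - m * sin θ ^ 2 := by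
  rcases le_or_gt m 0 with h | h
  · nlinarith [sq_nonneg (sin θ)]
  · nlinarith [sin_sq_le_one θ]

lemma continuous_ellE : Continuous ellE :=
  intervalIntegral.continuous_parametric_intervalIntegral_of_continuous' (by fun_prop) _ _

lemma continuousOn_ellJ : ContinuousOn ellJ (Iio 1) := by
  rw [continuousOn_iff_continuous_domRestrict]
  refine intervalIntegral.continuous_parametric_intervalIntegral_of_continuous'
    (μ := MeasureTheory.volume)
    (f := fun (m : Iio (1 : ℝ)) θ => cos θ ^ 2 * (√(1 - (m : ℝ) * sin θ ^ 2))⁻¹) ?_ _ _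
  refine .mul (by fun_prop) (.inv₀ (by fun_prop) fun p => ?_)
  exact (sqrt_pos.mpr (one_sub_mul_sin_sq_pos p.1.2 p.2)).ne'

lemma ellE_zero : ellE 0 = π / 2 := by
  simp [ellE]

lemma ellJ_zero : ellJ 0 = π / 4 := by
  simp [ellJ, integral_cos_sq]
  ring

lemma ellE_sub_mul_ellK {m : ℝ} (hm : m < 1) : ellE m - (1 - m) * ellK m = m * ellJ m := by
  have hK : Continuous fun θ => (√(1 - m * sin θ ^ 2))⁻¹ :=
    .inv₀ (by fun_prop) fun θ => (sqrt_pos.mpr (one_sub_mul_sin_sq_pos hm θ)).ne'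
  have hE : Continuous fun θ => √(1 - m * sin θ ^ 2) := by fun_prop
  rw [ellE, ellK, ellJ, ← intervalIntegral.integral_const_mul,
    ← intervalIntegral.integral_const_mul, ← intervalIntegral.integral_sub
      (hE.intervalIntegrable _ _) ((hK.const_mul _).intervalIntegrable _ _)]
  refine intervalIntegral.integral_congr fun θ _ => ?_
  have hu := one_sub_mul_sin_sq_pos hm θ
  have hsq := sq_sqrt hu.le
  have := sqrt_pos.mpr hu
  field_simp
  nlinarith [sin_sq_add_cos_sq θ]

lemma tendsto_sqrt_div_one_sub_mul_ellE :
    Tendsto (fun m => √m / (1 - m) * ellE m) (𝓝 0) (𝓝 0) := by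
  have h := ((continuous_sqrt.tendsto 0).div ((tendsto_const_nhds (x := (1 : ℝ))).sub tendsto_id)
    (by norm_num)).mul (continuous_ellE.tendsto 0)
  simpa using h

lemma continuousAt_ellJ_zero : ContinuousAt ellJ 0 :=
  continuousOn_ellJ.continuousAt (Iio_mem_nhds one_pos)

lemma tendsto_div_one_sub_mul_ellJ :
    Tendsto (fun m => m / (1 - m) * ellJ m) (𝓝 0) (𝓝 0) := by
  have h := (tendsto_id.div ((tendsto_const_nhds (x := (1 : ℝ))).sub tendsto_id) (by norm_num)).mul
    continuousAt_ellJ_zero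
  simpa using h

lemma tendsto_ellE_sq_div_one_sub_mul_ellJ :
    Tendsto (fun m => ellE m ^ 2 / ((1 - m) * ellJ m)) (𝓝 0) (𝓝 π) := by
  have hJ : (1 - 0) * ellJ 0 ≠ 0 := by simp [ellJ_zero, pi_ne_zero]
  have h := ((continuous_ellE.tendsto 0).pow 2).div
    ((tendsto_const_nhds.sub tendsto_id).mul continuousAt_ellJ_zero) hJ
  rwa [ellE_zero, ellJ_zero, show (π / 2) ^ 2 / ((1 - 0) * (π / 4)) = π by field_simp; ring] at h

section GKP

variable (L : ℝ) {ω : ℝ}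

lemma gkpE_eq (hω : 0 < ω) :
    gkpE L ω = 2 * L ^ 2 / π * (√(1 / ω ^ 2) / (1 - 1 / ω ^ 2) * ellE (1 / ω ^ 2)) := by
  have h : ω / (ω ^ 2 - 1) = √(1 / ω ^ 2) / (1 - 1 / ω ^ 2) := by
    rw [sqrt_div' _ (sq_nonneg ω), sqrt_sq hω.le, sqrt_one]
    field_simp
  rw [gkpE, h, mul_assoc]

lemma gkpS_eq (hω : 1 < ω) :
    gkpS L ω = 2 * L ^ 2 / π * (1 / ω ^ 2 / (1 - 1 / ω ^ 2) * ellJ (1 / ω ^ 2)) := by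
  have hω2 : 1 < ω ^ 2 := one_lt_pow₀ hω two_ne_zero
  have hm : 1 / ω ^ 2 < 1 := (div_lt_one (by positivity)).2 hω2
  have : ω ^ 2 - 1 ≠ 0 := by linarith
  have h : 1 / ω ^ 2 / (1 - 1 / ω ^ 2) * ellJ (1 / ω ^ 2) =
      (ellE (1 / ω ^ 2) - (1 - 1 / ω ^ 2) * ellK (1 / ω ^ 2)) / (1 - 1 / ω ^ 2) := by
    rw [ellE_sub_mul_ellK hm]
    ring
  rw [gkpS, h]
  congr 1
  field_simp

lemma gkpE_sq_div_gkpS (hω : 1 < ω) :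
    gkpE L ω ^ 2 / gkpS L ω =
      2 * L ^ 2 / π * (ellE (1 / ω ^ 2) ^ 2 / ((1 - 1 / ω ^ 2) * ellJ (1 / ω ^ 2))) := by
  have hm0 : 0 < 1 / ω ^ 2 := by positivity
  have hm1 : 1 / ω ^ 2 < 1 := (div_lt_one (by positivity)).2 (one_lt_pow₀ hω two_ne_zero)
  rw [gkpE_eq L (by linarith), gkpS_eq L hω]
  generalize 2 * L ^ 2 / π = c
  generalize 1 / ω ^ 2 = m at hm0 hm1 ⊢
  rcases eq_or_ne c 0 with rfl | hc
  · simp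
  have h1m : 1 - m ≠ 0 := by linarith
  have hk : c * (m / (1 - m)) ≠ 0 := mul_ne_zero hc (div_ne_zero hm0.ne' h1m)
  have hsq : (c * (√m / (1 - m) * ellE m)) ^ 2 =
      c * (m / (1 - m)) * (c * (ellE m ^ 2 / (1 - m))) := by
    rw [mul_pow, mul_pow, div_pow, sq_sqrt hm0.le]
    field_simp
  rw [hsq, ← mul_assoc c, mul_div_mul_left _ _ hk, mul_div_assoc, div_div]

end GKP

theorem gkp_short_string_regge_general (L : ℝ) :
    Tendsto (fun ω => gkpE L ω) atTop (𝓝 0) ∧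
    Tendsto (fun ω => gkpS L ω) atTop (𝓝 0) ∧
    Tendsto (fun ω => (gkpE L ω) ^ 2 / gkpS L ω) atTop (𝓝 (2 * L ^ 2)) := by
  have hm : Tendsto (fun ω : ℝ => 1 / ω ^ 2) atTop (𝓝 0) :=
    tendsto_const_nhds.div_atTop (tendsto_pow_atTop two_ne_zero)
  have hω : ∀ᶠ ω : ℝ in atTop, 1 < ω := eventually_gt_atTop 1
  refine ⟨?_, ?_, ?_⟩
  · have h := (tendsto_sqrt_div_one_sub_mul_ellE.comp hm).const_mul (2 * L ^ 2 / π)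
    rw [mul_zero] at h
    exact h.congr' (hω.mono fun ω h1 => (gkpE_eq L (by linarith)).symm)
  · have h := (tendsto_div_one_sub_mul_ellJ.comp hm).const_mul (2 * L ^ 2 / π)
    rw [mul_zero] at h
    exact h.congr' (hω.mono fun ω h1 => (gkpS_eq L h1).symm)
  · have h := (tendsto_ellE_sq_div_one_sub_mul_ellJ.comp hm).const_mul (2 * L ^ 2 / π)
    rw [div_mul_cancel₀ _ pi_ne_zero] at h
    exact h.congr' (hω.mono fun ω h1 => (gkpE_sq_div_gkpS L h1).symm)

/-- In the short-string limit ω → ∞, the energy and spin tend to zero and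
the leading Regge trajectory relation E(ω)²/S(ω) → 2√λ holds, with √λ = L². -/
theorem gkp_short_string_regge (L : ℝ) (hL : 0 < L) :
    Tendsto (fun ω => gkpE L ω) atTop (𝓝 0) ∧
    Tendsto (fun ω => gkpS L ω) atTop (𝓝 0) ∧
    Tendsto (fun ω => (gkpE L ω) ^ 2 / gkpS L ω) atTop (𝓝 (2 * L ^ 2)) :=
  gkp_short_string_regge_general L
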